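/- Lower bound on the smoothed gradient norm: Let d ≥ 1, L ≥ 0, μ > 0, and let f : ℝ^d → ℝ be differentiable and L-smooth. Then for every x ∈ ℝ^d, ‖∇f_μ(x)‖² ≥ (1/2)‖∇f(x)‖² − (μ² L² / 4)(d + 3)³. -/

import Mathlib

/-!
Differentiating under the integral sign gives `∇f_μ(x) = E[∇f(x + μu)]`, so L-smoothness yields
`‖∇f_μ(x) - ∇f(x)‖ ≤ L |μ| E‖u‖ ≤ L |μ| √d`, because `(E‖u‖)² ≤ E‖u‖² = d` for the standard
Gaussian. Conclude with `‖∇f(x)‖² ≤ 2‖∇f_μ(x)‖² + 2‖∇f_μ(x) - ∇f(x)‖²` and `d ≤ (d + 3)³ / 4`.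
-/

open MeasureTheory ProbabilityTheory

/-- The standard Gaussian measure `N(0, I_d)` on `ℝ^d`. -/
noncomputable def stdGaussian (d : ℕ) : Measure (EuclideanSpace ℝ (Fin d)) :=
  (Measure.pi fun _ : Fin d => gaussianReal 0 1).map
    (MeasurableEquiv.toLp 2 (Fin d → ℝ))

open scoped NNReal RealInnerProductSpace

namespace ProbabilityTheory

variable {E : Type*} [NormedAddCommGroup E] [InnerProductSpace ℝ E] [FiniteDimensional ℝ E]
  [MeasurableSpace E] [BorelSpace E]

lemma integral_inner_sq_stdGaussian (v : E) :
    ∫ x, ⟪v, x⟫ ^ 2 ∂(stdGaussian E) = ‖v‖ ^ 2 := by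
  have hvar := variance_eq_sub (IsGaussian.memLp_dual (stdGaussian E) (innerSL ℝ v) 2 (by simp))
  rw [variance_dual_stdGaussian, integral_strongDual_stdGaussian, innerSL_apply_norm] at hvar
  simpa [innerSL_apply_apply] using hvar.symm

lemma integral_norm_sq_stdGaussian :
    ∫ x, ‖x‖ ^ 2 ∂(stdGaussian E) = Module.finrank ℝ E := by
  let b := stdOrthonormalBasis ℝ E
  have hnorm (x : E) : ‖x‖ ^ 2 = ∑ i, ⟪b i, x⟫ ^ 2 := by
    simp_rw [← b.sum_sq_inner_left x, real_inner_comm]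
  simp_rw [hnorm]
  rw [integral_finsetSum]
  · simp [integral_inner_sq_stdGaussian, b.norm_eq_one]
  · exact fun i _ =>
      (IsGaussian.memLp_dual (stdGaussian E) (innerSL ℝ (b i)) 2 (by simp)).integrable_sq

lemma sq_integral_norm_stdGaussian_le :
    (∫ x, ‖x‖ ∂(stdGaussian E)) ^ 2 ≤ Module.finrank ℝ E := by
  have hvar := variance_eq_sub (IsGaussian.memLp_two_id (μ := stdGaussian E)).norm
  simp only [id, Pi.pow_apply] at hvar
  rw [← integral_norm_sq_stdGaussian]
  linarith [variance_nonneg (fun x : E => ‖x‖) (stdGaussian E)]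

end ProbabilityTheory

theorem stdGaussian_eq_stdGaussian_euclideanSpace (d : ℕ) :
    stdGaussian d = ProbabilityTheory.stdGaussian (EuclideanSpace ℝ (Fin d)) := by
  rw [_root_.stdGaussian, MeasurableEquiv.coe_toLp, map_pi_eq_stdGaussian]

section LipschitzDerivative

variable {E F : Type*} [NormedAddCommGroup E] [NormedSpace ℝ E]
  [NormedAddCommGroup F] [NormedSpace ℝ F] {f : E → F} {K : ℝ≥0}

lemma norm_fderiv_le_of_lipschitzWith (hf' : LipschitzWith K (fderiv ℝ f)) (x y : E) :
    ‖fderiv ℝ f y‖ ≤ ‖fderiv ℝ f x‖ + K * ‖y - x‖ :=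
  (norm_le_insert' _ _).trans (add_le_add_right (hf'.norm_sub_le y x) _)

lemma norm_image_add_sub_le_of_lipschitzWith_fderiv (hf : Differentiable ℝ f)
    (hf' : LipschitzWith K (fderiv ℝ f)) (x h : E) :
    ‖f (x + h) - f x‖ ≤ (‖fderiv ℝ f x‖ + K * ‖h‖) * ‖h‖ := by
  have hmem : x + h ∈ Metric.closedBall x ‖h‖ := by simp
  simpa using (convex_closedBall x ‖h‖).norm_image_sub_le_of_norm_fderiv_le
    (fun z _ => hf z) (fun z hz => (norm_fderiv_le_of_lipschitzWith hf' x z).trans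
      (by gcongr; exact mem_closedBall_iff_norm.mp hz))
    (Metric.mem_closedBall_self (norm_nonneg h)) hmem

end LipschitzDerivative

section Smoothing

variable {E F : Type*} [NormedAddCommGroup E] [NormedSpace ℝ E] [MeasurableSpace E]
  [BorelSpace E] [SecondCountableTopology E] [NormedAddCommGroup F] [NormedSpace ℝ F]
  {ν : Measure E} {f : E → F} {K : ℝ≥0}

lemma integrable_comp_add_smul [IsFiniteMeasure ν] (hf : Differentiable ℝ f)
    (hf' : LipschitzWith K (fderiv ℝ f)) (hν : MemLp id 2 ν) (x : E) (μ : ℝ) :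
    Integrable (fun u => f (x + μ • u)) ν := by
  have hnorm : Integrable (fun u : E => ‖u‖) ν := (hν.integrable one_le_two).norm
  have hsq : Integrable (fun u : E => ‖u‖ ^ 2) ν := hν.integrable_norm_pow'
  refine Integrable.mono'
    (g := fun u => ‖f x‖ + ‖fderiv ℝ f x‖ * |μ| * ‖u‖ + K * μ ^ 2 * ‖u‖ ^ 2)
    (((integrable_const _).add (hnorm.const_mul _)).add (hsq.const_mul _))
    (hf.continuous.comp (continuous_const.add (continuous_const_smul μ))).aestronglyMeasurable
    (ae_of_all _ fun u => ?_)
  have hgrowth := norm_image_add_sub_le_of_lipschitzWith_fderiv hf hf' x (μ • u)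
  rw [norm_smul, Real.norm_eq_abs] at hgrowth
  have hexpand : (‖fderiv ℝ f x‖ + K * (|μ| * ‖u‖)) * (|μ| * ‖u‖)
      = ‖fderiv ℝ f x‖ * |μ| * ‖u‖ + K * μ ^ 2 * ‖u‖ ^ 2 := by
    rw [← sq_abs μ]; ring
  linarith [norm_le_insert' (f (x + μ • u)) (f x)]

lemma hasFDerivAt_integral_comp_add_smul [CompleteSpace F] [IsFiniteMeasure ν]
    (hf : Differentiable ℝ f) (hf' : LipschitzWith K (fderiv ℝ f)) (hν : MemLp id 2 ν)
    (x : E) (μ : ℝ) :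
    HasFDerivAt (fun y => ∫ u, f (y + μ • u) ∂ν) (∫ u, fderiv ℝ f (x + μ • u) ∂ν) x := by
  have hnorm : Integrable (fun u : E => ‖u‖) ν := (hν.integrable one_le_two).norm
  have hshift (y : E) : Continuous fun u : E => y + μ • u :=
    continuous_const.add (continuous_const_smul μ)
  refine hasFDerivAt_integral_of_dominated_of_fderiv_le (Metric.ball_mem_nhds x one_pos)
    (bound := fun u => ‖fderiv ℝ f x‖ + K * (1 + |μ| * ‖u‖))
    (.of_forall fun y => (hf.continuous.comp (hshift y)).aestronglyMeasurable)
    (integrable_comp_add_smul hf hf' hν x μ)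
    ((hf'.continuous.comp (hshift x)).aestronglyMeasurable)
    (ae_of_all _ fun u y hy => ?_)
    ((integrable_const _).add (((integrable_const _).add (hnorm.const_mul _)).const_mul _))
    (ae_of_all _ fun u y _ => (hasFDerivAt_comp_add_right (μ • u)).2 (hf _).hasFDerivAt)
  have hyx : ‖y - x‖ < 1 := by simpa [dist_eq_norm] using hy
  have hdist : ‖y + μ • u - x‖ ≤ ‖y - x‖ + |μ| * ‖u‖ := by
    simpa [add_sub_right_comm, norm_smul] using norm_add_le (y - x) (μ • u)
  refine (norm_fderiv_le_of_lipschitzWith hf' x _).trans ?_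
  gcongr
  linarith

lemma norm_integral_fderiv_comp_add_smul_sub_le [CompleteSpace F] [IsProbabilityMeasure ν]
    (hf' : LipschitzWith K (fderiv ℝ f)) (hν : Integrable id ν) (x : E) (μ : ℝ) :
    ‖∫ u, fderiv ℝ f (x + μ • u) ∂ν - fderiv ℝ f x‖ ≤ K * |μ| * ∫ u, ‖u‖ ∂ν := by
  have hbound (u : E) : ‖fderiv ℝ f (x + μ • u) - fderiv ℝ f x‖ ≤ K * |μ| * ‖u‖ := by
    simpa [norm_smul, mul_assoc] using hf'.norm_sub_le (x + μ • u) x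
  have hint : Integrable (fun u => fderiv ℝ f (x + μ • u) - fderiv ℝ f x) ν :=
    (hν.norm.const_mul _).mono'
      ((hf'.continuous.comp (continuous_const.add (continuous_const_smul μ))).sub
        continuous_const).aestronglyMeasurable
      (ae_of_all _ hbound)
  have hint' : Integrable (fun u => fderiv ℝ f (x + μ • u)) ν :=
    (hint.add (integrable_const (fderiv ℝ f x))).congr (ae_of_all _ fun _ => sub_add_cancel _ _)
  have hconst : fderiv ℝ f x = ∫ _, fderiv ℝ f x ∂ν := by simp
  rw [hconst, ← integral_sub hint' (integrable_const _), ← integral_const_mul]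
  exact (norm_integral_le_integral_norm _).trans
    (integral_mono hint.norm (hν.norm.const_mul _) hbound)

end Smoothing

section Gradient

variable {E : Type*} [NormedAddCommGroup E] [InnerProductSpace ℝ E] [CompleteSpace E]

lemma norm_gradient (f : E → ℝ) (x : E) : ‖gradient f x‖ = ‖fderiv ℝ f x‖ :=
  LinearIsometryEquiv.norm_map _ _

lemma norm_gradient_sub_gradient (f : E → ℝ) (x y : E) :
    ‖gradient f x - gradient f y‖ = ‖fderiv ℝ f x - fderiv ℝ f y‖ := by
  rw [gradient, gradient, ← map_sub, LinearIsometryEquiv.norm_map]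

end Gradient

lemma half_norm_sq_sub_norm_sub_sq_le {G : Type*} [SeminormedAddCommGroup G] (a b : G) :
    ‖b‖ ^ 2 / 2 - ‖a - b‖ ^ 2 ≤ ‖a‖ ^ 2 := by
  have htri : ‖b‖ ≤ ‖a‖ + ‖a - b‖ := by simpa [norm_sub_rev] using norm_le_insert' b a
  nlinarith [mul_self_le_mul_self (norm_nonneg b) htri, sq_nonneg (‖a‖ - ‖a - b‖)]

theorem smoothed_gradient_norm_lower_bound_general
    (d : ℕ) (L μ : ℝ)
    (f : EuclideanSpace ℝ (Fin d) → ℝ)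
    (hf : Differentiable ℝ f)
    (hsmooth : ∀ x y, ‖gradient f x - gradient f y‖ ≤ L * ‖x - y‖)
    (x : EuclideanSpace ℝ (Fin d)) :
    ‖gradient (fun y => ∫ u, f (y + μ • u) ∂stdGaussian d) x‖ ^ 2
      ≥ (1 / 2) * ‖gradient f x‖ ^ 2 - μ ^ 2 * L ^ 2 / 4 * ((d : ℝ) + 3) ^ 3 := by
  have hf' : LipschitzWith ‖L‖₊ (fderiv ℝ f) := .of_dist_le_mul fun a b => by
    rw [dist_eq_norm, dist_eq_norm, ← norm_gradient_sub_gradient, coe_nnnorm, Real.norm_eq_abs]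
    exact (hsmooth a b).trans (by gcongr; exact le_abs_self L)
  rw [stdGaussian_eq_stdGaussian_euclideanSpace]
  set ν := ProbabilityTheory.stdGaussian (EuclideanSpace ℝ (Fin d))
  have hderiv := hasFDerivAt_integral_comp_add_smul hf hf' (IsGaussian.memLp_two_id (μ := ν)) x μ
  have hdist :=
    norm_integral_fderiv_comp_add_smul_sub_le hf' (IsGaussian.integrable_id (μ := ν)) x μ
  have hmoment : (∫ u, ‖u‖ ∂ν) ^ 2 ≤ d := by
    simpa [ν] using sq_integral_norm_stdGaussian_le (E := EuclideanSpace ℝ (Fin d))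
  have herror : ‖∫ u, fderiv ℝ f (x + μ • u) ∂ν - fderiv ℝ f x‖ ^ 2 ≤ μ ^ 2 * L ^ 2 * d :=
    calc _ ≤ (|L| * |μ| * ∫ u, ‖u‖ ∂ν) ^ 2 := by gcongr; simpa using hdist
      _ = μ ^ 2 * L ^ 2 * (∫ u, ‖u‖ ∂ν) ^ 2 := by rw [mul_pow, mul_pow, sq_abs, sq_abs]; ring
      _ ≤ μ ^ 2 * L ^ 2 * d := by gcongr
  have hd : (d : ℝ) ≤ ((d : ℝ) + 3) ^ 3 / 4 := by
    have := d.cast_nonneg (α := ℝ)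
    nlinarith [pow_nonneg this 3, sq_nonneg (d : ℝ)]
  have hgap : μ ^ 2 * L ^ 2 * d ≤ μ ^ 2 * L ^ 2 * (((d : ℝ) + 3) ^ 3 / 4) := by gcongr
  rw [norm_gradient, norm_gradient, hderiv.fderiv]
  linarith [half_norm_sq_sub_norm_sub_sq_le (∫ u, fderiv ℝ f (x + μ • u) ∂ν) (fderiv ℝ f x)]

/-- Lower bound on the smoothed gradient norm:
`‖∇f_μ(x)‖² ≥ (1/2)‖∇f(x)‖² - (μ² L² / 4)(d+3)³`. -/
theorem smoothed_gradient_norm_lower_bound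
    (d : ℕ) (hd : 1 ≤ d) (L μ : ℝ) (hL : 0 ≤ L) (hμ : 0 < μ)
    (f : EuclideanSpace ℝ (Fin d) → ℝ)
    (hf : Differentiable ℝ f)
    (hsmooth : ∀ x y, ‖gradient f x - gradient f y‖ ≤ L * ‖x - y‖)
    (x : EuclideanSpace ℝ (Fin d)) :
    ‖gradient (fun y => ∫ u, f (y + μ • u) ∂stdGaussian d) x‖ ^ 2
      ≥ (1 / 2) * ‖gradient f x‖ ^ 2 - μ ^ 2 * L ^ 2 / 4 * ((d : ℝ) + 3) ^ 3 :=
  smoothed_gradient_norm_lower_bound_general d L μ f hf hsmooth x
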